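/- Maximal inequality transfer: if B_{1/2}{max_{1≤k≤m} S_k > a} ≤ 2 B_{1/2}{S_m > a} for partial sums S_k = ∑_{i=1}^k ω_i with ω_i i.i.d. fair Bernoulli, then for δ > 1 and m_n = ⌈δ^n⌉ the sets U_{δ,n} = {ω : ∃k (m_n ≤ k ≤ m_{n+1} and S_k − k/2 > δ sqrt((1/2) m_n ln ln m_n))} satisfy B_{1/2}(U_{δ,n}) ≤ c·e^{−δ ln ln m_n} for some constant c > 0, and consequently ∑_n B_{1/2}(U_{δ,n}) < ∞. -/

import Mathlib

open MeasureTheory Filter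

/-- The cylinder set determined by a finite binary string. -/
def Cyl (x : List Bool) : Set (ℕ → Bool) :=
  {ω | ∀ i : Fin x.length, ω i = x.get i}

/-- The length-`n` prefix of an infinite binary sequence. -/
def Pre (ω : ℕ → Bool) (n : ℕ) : List Bool := (List.range n).map ω

/-- `x` is a prefix of the infinite sequence `ω`. -/
def PrefixOf (x : List Bool) (ω : ℕ → Bool) : Prop :=
  ∀ i : Fin x.length, ω i = x.get i

/-- `μ` is the uniform Bernoulli measure `B_{1/2}` on Cantor space. -/
def UniformMeasure (μ : Measure (ℕ → Bool)) : Prop :=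
  ∀ x : List Bool, μ (Cyl x) = (2 : ENNReal)⁻¹ ^ x.length

/-- A Solovay test: a computable sequence of strings whose weights form a convergent series. -/
def SolovayTest (x : ℕ → List Bool) : Prop :=
  Computable x ∧ Summable (fun n => (2 : ℝ) ^ (-((x n).length : ℤ)))

/-- `ω` passes the Solovay test `x`: only finitely many `x n` are prefixes of `ω`. -/
def PassesSolovay (x : ℕ → List Bool) (ω : ℕ → Bool) : Prop :=
  {n | PrefixOf (x n) ω}.Finite

/-- A total Solovay test: the series converges with a computable rate of convergence. -/
def TotalSolovayTest (x : ℕ → List Bool) : Prop :=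
  SolovayTest x ∧ ∃ m : ℚ → ℕ, Computable m ∧
    ∀ δ : ℚ, 0 < δ → ∑' n : {n : ℕ // m δ ≤ n}, (2 : ℝ) ^ (-((x n.1).length : ℤ)) ≤ (δ : ℝ)

/-- The effectively open set enumerated by the `n`-th row of `f`. -/
def EffOpen (f : ℕ → ℕ → List Bool) (n : ℕ) : Set (ℕ → Bool) := ⋃ i, Cyl (f n i)

/-- A Martin-Löf test with respect to `μ`. -/
def MLTest (μ : Measure (ℕ → Bool)) (f : ℕ → ℕ → List Bool) : Prop :=
  Computable₂ f ∧ ∀ n, μ (EffOpen f n) ≤ (2 : ENNReal)⁻¹ ^ n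

/-- A Schnorr test: a Martin-Löf test whose measures are uniformly computable reals. -/
def SchnorrTest (μ : Measure (ℕ → Bool)) (f : ℕ → ℕ → List Bool) : Prop :=
  MLTest μ f ∧ ∃ g : ℕ → ℚ → ℚ, Computable₂ g ∧
    ∀ (n : ℕ) (ε : ℚ), 0 < ε → |(g n ε : ℝ) - (μ (EffOpen f n)).toReal| ≤ (ε : ℝ)

/-- Martin-Löf randomness with respect to `μ`. -/
def MLRandom (μ : Measure (ℕ → Bool)) (ω : ℕ → Bool) : Prop :=
  ∀ f, MLTest μ f → ∃ n, ω ∉ EffOpen f n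

/-- Schnorr randomness with respect to `μ`. -/
def SchnorrRandom (μ : Measure (ℕ → Bool)) (ω : ℕ → Bool) : Prop :=
  ∀ f, SchnorrTest μ f → ∃ n, ω ∉ EffOpen f n

/-- A monotone machine: a partial computable monotone map on binary strings. -/
def MonotoneMachine (ψ : List Bool →. List Bool) : Prop :=
  Partrec ψ ∧ ∀ p p' y y', y ∈ ψ p → y' ∈ ψ p' → p <+: p' → (y <+: y' ∨ y' <+: y)

/-- `Km` is the monotone Kolmogorov complexity determined by some optimal monotone machine. -/
def IsKm (Km : List Bool → ℕ) : Prop :=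
  ∃ ψ : List Bool →. List Bool, MonotoneMachine ψ ∧
    (∀ x : List Bool, ∃ p y, y ∈ ψ p ∧ x <+: y ∧ p.length = Km x) ∧
    (∀ x p y, y ∈ ψ p → x <+: y → Km x ≤ p.length) ∧
    (∀ ψ' : List Bool →. List Bool, MonotoneMachine ψ' →
      ∃ c : ℕ, ∀ x p y, y ∈ ψ' p → x <+: y → Km x ≤ p.length + c)

/-- A computable real-valued function on Cantor space. -/
def ComputableRealFn (f : (ℕ → Bool) → ℝ) : Prop :=
  ∃ F : List Bool → ℚ → ℚ, ∃ k : ℚ → ℕ, Computable₂ F ∧ Computable k ∧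
    ∀ (ω : ℕ → Bool) (ε : ℚ), 0 < ε → |(F (Pre ω (k ε)) ε : ℝ) - f ω| ≤ (ε : ℝ)

/-- A computable transformation of Cantor space, induced by a monotone machine. -/
def ComputableTrans (T : (ℕ → Bool) → (ℕ → Bool)) : Prop :=
  ∃ ψ : List Bool →. List Bool, MonotoneMachine ψ ∧
    ∀ ω : ℕ → Bool, (∀ n y, y ∈ ψ (Pre ω n) → y = Pre (T ω) y.length) ∧
      (∀ k, ∃ n y, y ∈ ψ (Pre ω n) ∧ k ≤ y.length)

/-- The number of ones among the first `k` coordinates. -/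
def Ones (k : ℕ) (ω : ℕ → Bool) : ℝ := ∑ i ∈ Finset.range k, (if ω i then (1 : ℝ) else 0)

/-!
Restricting to the first `M` coordinates turns `μ`-measures into counts of binary strings of
length `M`. Reflecting a string after the first time its centred walk `S_k - k/2` exceeds `b`
shows that at most twice as many strings exceed `b` at some `k ≤ M` as at time `M`, and the
exponential moment `(2 cosh (s/2))^M ≤ 2^M exp (M s²/8)` with `s = 4b/M` bounds the latter by
`2^M exp (-2b²/M)`. For `M = m_{n+1}` and `b = δ √(m_n ln ln m_n / 2)` this is
`2e · exp (-δ ln ln m_n)`, and `ln ln m_n ≥ ln (n ln δ)` compares the series with `∑ n^{-δ}`.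
-/

open Finset

theorem card_exists_lt_le_two_mul_card {α : Type*} [Fintype α]
    (T : ℕ → α → ℝ) (flip : ℕ → α → α) (M : ℕ) (b : ℝ)
    (flip_flip : ∀ k x, flip k (flip k x) = x)
    (T_flip_of_le : ∀ {j k} x, j ≤ k → k ≤ M → T j (flip k x) = T j x)
    (T_add_T_flip : ∀ {k} x, k ≤ M → T M x + T M (flip k x) = 2 * T k x) :
    #{x | ∃ k ≤ M, b < T k x} ≤ 2 * #{x | b < T M x} := by
  classical
  set A : Finset α := {x | ∃ k ≤ M, b < T k x}
  set B : Finset α := {x | b < T M x}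
  let τ : α → ℕ := fun x => if h : ∃ k, b < T k x then Nat.find h else 0
  have τ_eq {x k} (hk : b < T k x) (hmin : ∀ j < k, T j x ≤ b) : τ x = k := by
    simp only [τ, dif_pos (⟨k, hk⟩ : ∃ k, b < T k x), Nat.find_eq_iff, not_lt]
    exact ⟨hk, hmin⟩
  have first_passage {x} (hx : x ∈ A) : ∃ k ≤ M, b < T k x ∧ ∀ j < k, T j x ≤ b := by
    obtain ⟨k, hkM, hk⟩ := (mem_filter.1 hx).2
    have h : ∃ k, b < T k x := ⟨k, hk⟩
    exact ⟨Nat.find h, (Nat.find_min' h hk).trans hkM, Nat.find_spec h,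
      fun j hj => not_lt.1 (Nat.find_min h hj)⟩
  have τ_flip {x} (hx : x ∈ A) : τ (flip (τ x) x) = τ x := by
    obtain ⟨k, hkM, hk, hmin⟩ := first_passage hx
    rw [τ_eq hk hmin]
    exact τ_eq (by rwa [T_flip_of_le x le_rfl hkM]) fun j hj =>
      (T_flip_of_le x hj.le hkM).trans_le (hmin j hj)
  have maps : Set.MapsTo (fun x => flip (τ x) x) (A \ B : Finset α) B := by
    intro x hx
    obtain ⟨hxA, hxB⟩ := mem_sdiff.1 hx
    obtain ⟨k, hkM, hk, hmin⟩ := first_passage hxA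
    have := T_add_T_flip x hkM
    simp only [B, mem_coe, mem_filter, mem_univ, true_and, not_lt] at hxB ⊢
    rw [τ_eq hk hmin]
    linarith
  have inj : Set.InjOn (fun x => flip (τ x) x) (A \ B : Finset α) := by
    intro x hx y hy hxy
    have hx := (mem_sdiff.1 hx).1
    have hy := (mem_sdiff.1 hy).1
    have hτ : τ x = τ y := by
      simpa only [τ_flip hx, τ_flip hy] using congrArg τ hxy
    simp only [hτ] at hxy
    rw [← flip_flip (τ y) x, hxy, flip_flip]
  calc #A = #(A ∩ B) + #(A \ B) := (card_inter_add_card_sdiff A B).symm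
    _ ≤ #B + #B := add_le_add (card_le_card inter_subset_right) (card_le_card_of_injOn _ maps inj)
    _ = 2 * #B := by ring

lemma card_filter_lt_mul_exp_le_sum_exp {α : Type*} [Fintype α] (f : α → ℝ) (b : ℝ) {s : ℝ}
    (hs : 0 ≤ s) : #{x | b < f x} * Real.exp (s * b) ≤ ∑ x, Real.exp (s * f x) :=
  calc #{x | b < f x} * Real.exp (s * b) = ∑ x with b < f x, Real.exp (s * b) := by
        rw [sum_const, nsmul_eq_mul]
    _ ≤ ∑ x with b < f x, Real.exp (s * f x) :=
        sum_le_sum fun x hx => Real.exp_le_exp.2 <|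
          mul_le_mul_of_nonneg_left (mem_filter.1 hx).2.le hs
    _ ≤ ∑ x, Real.exp (s * f x) :=
        sum_le_sum_of_subset_of_nonneg (filter_subset _ _) fun _ _ _ => (Real.exp_pos _).le

lemma sum_exp_mul_sum_centered {ι : Type*} [Fintype ι] [DecidableEq ι] (s : ℝ) :
    ∑ x : ι → Bool, Real.exp (s * ∑ i, ((if x i then 1 else 0) - 1 / 2)) =
      (2 * Real.cosh (s / 2)) ^ Fintype.card ι := by
  simp only [mul_sum, Real.exp_sum]
  rw [← Fintype.prod_sum (fun (_ : ι) (c : Bool) => Real.exp (s * ((if c then 1 else 0) - 1 / 2))),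
    prod_const, card_univ, Fintype.sum_bool, Real.cosh_eq]
  congr 1
  norm_num
  ring_nf

lemma card_lt_sum_centered_le {ι : Type*} [Fintype ι] [DecidableEq ι] [Nonempty ι]
    {b : ℝ} (hb : 0 ≤ b) :
    (#{x : ι → Bool | b < ∑ i, ((if x i then 1 else 0) - 1 / 2)} : ℝ) ≤
      2 ^ Fintype.card ι * Real.exp (-2 * b ^ 2 / Fintype.card ι) := by
  set M : ℝ := (Fintype.card ι : ℝ)
  have hM : 0 < M := by simp [M, Fintype.card_pos]
  set s := 4 * b / M
  have hmgf : ∑ x : ι → Bool, Real.exp (s * ∑ i, ((if x i then 1 else 0) - 1 / 2)) ≤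
      2 ^ Fintype.card ι * Real.exp (M * s ^ 2 / 8) := by
    rw [sum_exp_mul_sum_centered, mul_pow]
    gcongr
    calc Real.cosh (s / 2) ^ Fintype.card ι ≤ Real.exp ((s / 2) ^ 2 / 2) ^ Fintype.card ι := by
          gcongr; exact Real.cosh_le_exp_half_sq _
      _ = Real.exp (M * s ^ 2 / 8) := by
          rw [← Real.exp_nat_mul]; congr 1; ring
  have hexp : M * s ^ 2 / 8 - s * b = -2 * b ^ 2 / M := by
    simp only [s]; field_simp; ring
  rw [← hexp, Real.exp_sub, mul_div_assoc', le_div_iff₀ (Real.exp_pos _)]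
  exact (card_filter_lt_mul_exp_le_sum_exp _ b (by positivity)).trans hmgf

def padFalse {M : ℕ} (x : Fin M → Bool) : ℕ → Bool :=
  fun i => if h : i < M then x ⟨i, h⟩ else false

def flipFrom (k : ℕ) (ω : ℕ → Bool) : ℕ → Bool :=
  fun i => if i < k then ω i else !ω i

lemma padFalse_apply {M : ℕ} (x : Fin M → Bool) (i : Fin M) : padFalse x i = x i := by
  simp [padFalse]

lemma padFalse_restrict_apply {M i : ℕ} (ω : ℕ → Bool) (hi : i < M) :
    padFalse (fun j : Fin M => ω j) i = ω i := by
  simp [padFalse, hi]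

lemma flipFrom_flipFrom (k : ℕ) (ω : ℕ → Bool) : flipFrom k (flipFrom k ω) = ω := by
  funext i; by_cases h : i < k <;> simp [flipFrom, h]

lemma ones_congr {k : ℕ} {ω ω' : ℕ → Bool} (h : ∀ i < k, ω i = ω' i) : Ones k ω = Ones k ω' :=
  sum_congr rfl fun i hi => by rw [h i (mem_range.1 hi)]

lemma ones_padFalse_restrict {M k : ℕ} (ω : ℕ → Bool) (hk : k ≤ M) :
    Ones k (padFalse (fun i : Fin M => ω i)) = Ones k ω :=
  ones_congr fun _ hi => padFalse_restrict_apply ω (hi.trans_le hk)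

lemma ones_padFalse {M : ℕ} (x : Fin M → Bool) :
    Ones M (padFalse x) = ∑ i, if x i then 1 else 0 := by
  rw [Ones, ← Fin.sum_univ_eq_sum_range (fun i => if padFalse x i then (1 : ℝ) else 0)]
  simp only [padFalse_apply]

lemma ones_flipFrom_of_le {j k : ℕ} (ω : ℕ → Bool) (hj : j ≤ k) :
    Ones j (flipFrom k ω) = Ones j ω :=
  ones_congr fun _ hi => if_pos (hi.trans_le hj)

lemma ones_add_ones_flipFrom {k n : ℕ} (ω : ℕ → Bool) (hk : k ≤ n) :
    Ones n ω + Ones n (flipFrom k ω) = 2 * Ones k ω + (n - k) := by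
  have hbefore : ∀ i ∈ range k, (if ω i then (1 : ℝ) else 0) + (if flipFrom k ω i then 1 else 0) =
      2 * if ω i then 1 else 0 := by
    intro i hi
    rw [flipFrom, if_pos (mem_range.1 hi)]; ring
  have hafter : ∀ i ∈ Ico k n,
      (if ω i then (1 : ℝ) else 0) + (if flipFrom k ω i then 1 else 0) = 1 := by
    intro i hi
    cases h : ω i <;> simp [flipFrom, h, not_lt.2 (mem_Ico.1 hi).1]
  rw [Ones, Ones, Ones, ← sum_add_distrib, ← sum_range_add_sum_Ico _ hk, sum_congr rfl hbefore,
    sum_congr rfl hafter, ← mul_sum]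
  simp [hk]

lemma card_exists_lt_ones_sub_le {M : ℕ} (hM : 0 < M) {b : ℝ} (hb : 0 ≤ b) :
    (#{x : Fin M → Bool | ∃ k ≤ M, b < Ones k (padFalse x) - k / 2} : ℝ) ≤
      2 * (2 ^ M * Real.exp (-2 * b ^ 2 / M)) := by
  have : NeZero M := ⟨hM.ne'⟩
  let flip (k : ℕ) (x : Fin M → Bool) : Fin M → Bool := fun i => flipFrom k (padFalse x) i
  have reflection := card_exists_lt_le_two_mul_card (fun k x => Ones k (padFalse x) - k / 2) flip
    M b
    (fun k x => funext fun i => by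
      by_cases h : (i : ℕ) < k <;> simp [flip, flipFrom, padFalse_apply, h])
    (fun x hjk hkM => by
      simp only [flip, ones_padFalse_restrict _ (hjk.trans hkM), ones_flipFrom_of_le _ hjk])
    (fun x hkM => by
      simp only [flip, ones_padFalse_restrict _ le_rfl]
      linarith [ones_add_ones_flipFrom (padFalse x) hkM])
  have hoeffding := card_lt_sum_centered_le (ι := Fin M) hb
  simp only [Fintype.card_fin, sum_sub_distrib, ← ones_padFalse, sum_const, card_univ,
    nsmul_eq_mul, mul_one_div] at hoeffding
  calc _ ≤ 2 * (#{x : Fin M → Bool | b < Ones M (padFalse x) - M / 2} : ℝ) := by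
        exact_mod_cast reflection
    _ ≤ _ := by gcongr

lemma measurableSet_cyl (x : List Bool) : MeasurableSet (Cyl x) := by
  have : Cyl x = ⋂ i : Fin x.length, (fun ω : ℕ → Bool => ω i) ⁻¹' {x.get i} := by
    ext ω; simp [Cyl, Set.mem_iInter]
  rw [this]
  exact .iInter fun i => measurable_pi_apply _ (measurableSet_singleton _)

lemma mem_cyl_ofFn_iff {M : ℕ} (x : Fin M → Bool) (ω : ℕ → Bool) :
    ω ∈ Cyl (List.ofFn x) ↔ (fun i : Fin M => ω i) = x := by
  simp only [Cyl, Set.mem_ofPred_eq, List.get_ofFn, funext_iff]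
  exact ⟨fun h i => by simpa using h (Fin.cast List.length_ofFn.symm i),
    fun h i => h (Fin.cast List.length_ofFn i)⟩

/-- The set `U_{δ,n}`, where `m_n = ⌈δ ^ n⌉₊`. -/
def lilBlock (δ : ℝ) (n : ℕ) : Set (ℕ → Bool) :=
  {ω | ∃ k : ℕ, ⌈δ ^ n⌉₊ ≤ k ∧ k ≤ ⌈δ ^ (n + 1)⌉₊ ∧
    δ * Real.sqrt ((1 / 2) * ⌈δ ^ n⌉₊ * Real.log (Real.log ⌈δ ^ n⌉₊)) < Ones k ω - k / 2}

lemma one_le_log_of_three_le {x : ℝ} (hx : 3 ≤ x) : 1 ≤ Real.log x := by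
  rw [Real.le_log_iff_exp_le (by linarith)]
  linarith [Real.exp_one_lt_d9]

lemma log_log_le_sub_two {x : ℝ} (hx : 3 ≤ x) : Real.log (Real.log x) ≤ x - 2 := by
  have h1 := one_le_log_of_three_le hx
  linarith [Real.log_le_sub_one_of_pos (by linarith : 0 < Real.log x),
    Real.log_le_sub_one_of_pos (by linarith : 0 < x)]

namespace UniformMeasure

variable {μ : Measure (ℕ → Bool)}

lemma isProbabilityMeasure (hμ : UniformMeasure μ) : IsProbabilityMeasure μ := by
  have : Cyl [] = Set.univ := by ext ω; simp [Cyl]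
  exact ⟨by simpa [this] using hμ []⟩

lemma measure_setOf_restrict (hμ : UniformMeasure μ) (M : ℕ) (p : (Fin M → Bool) → Prop)
    [DecidablePred p] :
    μ {ω | p (fun i : Fin M => ω i)} = #{x | p x} * (2 : ENNReal)⁻¹ ^ M := by
  have hset : {ω : ℕ → Bool | p (fun i : Fin M => ω i)} =
      ⋃ x ∈ ({x | p x} : Finset (Fin M → Bool)), Cyl (List.ofFn x) := by
    ext ω
    simp only [Set.mem_ofPred_eq, Set.mem_iUnion, mem_filter, mem_univ, true_and,
      mem_cyl_ofFn_iff, exists_prop, exists_eq_right']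
  rw [hset, measure_biUnion_finset _ (fun x _ => measurableSet_cyl _)]
  · rw [sum_congr rfl fun x _ => hμ _]
    simp
  · intro x _ y _ hxy
    refine Set.disjoint_left.2 fun ω hx hy => hxy ?_
    rw [← (mem_cyl_ofFn_iff x ω).1 hx, ← (mem_cyl_ofFn_iff y ω).1 hy]

lemma measure_exists_lt_ones_sub_le (hμ : UniformMeasure μ) {M : ℕ} (hM : 0 < M) {b : ℝ}
    (hb : 0 ≤ b) :
    μ {ω | ∃ k ≤ M, b < Ones k ω - k / 2} ≤ ENNReal.ofReal (2 * Real.exp (-2 * b ^ 2 / M)) := by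
  have hset : {ω : ℕ → Bool | ∃ k ≤ M, b < Ones k ω - k / 2} =
      {ω | ∃ k ≤ M, b < Ones k (padFalse (fun i : Fin M => ω i)) - k / 2} := by
    ext ω
    exact exists_congr fun k => and_congr_right fun hk => by rw [ones_padFalse_restrict ω hk]
  rw [hset, hμ.measure_setOf_restrict M (fun x => ∃ k ≤ M, b < Ones k (padFalse x) - k / 2),
    ENNReal.le_ofReal_iff_toReal_le (by finiteness) (by positivity)]
  simp only [ENNReal.toReal_mul, ENNReal.toReal_natCast, ENNReal.toReal_pow, ENNReal.toReal_inv,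
    ENNReal.toReal_ofNat]
  calc _ ≤ 2 * (2 ^ M * Real.exp (-2 * b ^ 2 / M)) * 2⁻¹ ^ M := by
        gcongr; exact card_exists_lt_ones_sub_le hM hb
    _ = 2 * Real.exp (-2 * b ^ 2 / M) := by rw [inv_pow]; field_simp

lemma measure_lilBlock_le (hμ : UniformMeasure μ) {δ : ℝ} (hδ : 1 < δ) {n : ℕ}
    (hn : 3 ≤ δ ^ n) :
    μ (lilBlock δ n) ≤
      ENNReal.ofReal (2 * Real.exp 1 * Real.exp (-δ * Real.log (Real.log ⌈δ ^ n⌉₊))) := by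
  set A := δ ^ n
  set m : ℝ := (⌈A⌉₊ : ℝ)
  set M := ⌈δ ^ (n + 1)⌉₊
  set L := Real.log (Real.log m)
  set b := δ * Real.sqrt ((1 / 2) * m * L)
  have hA : 0 < A := by positivity
  have hAm : A ≤ m := Nat.le_ceil A
  have hmA : m ≤ A + 1 := (Nat.ceil_lt_add_one hA.le).le
  have hM : (M : ℝ) ≤ δ * A + 1 := by
    have hceil : (M : ℝ) < δ ^ (n + 1) + 1 := Nat.ceil_lt_add_one (by positivity)
    have hpow : δ ^ (n + 1) = δ * A := pow_succ' δ n
    linarith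
  have hL : 0 ≤ L := Real.log_nonneg (one_le_log_of_three_le (hn.trans hAm))
  have hLA : L ≤ A := by linarith [log_log_le_sub_two (hn.trans hAm)]
  have hMpos : 0 < M := Nat.ceil_pos.2 (by positivity)
  have hsub : lilBlock δ n ⊆ {ω | ∃ k ≤ M, b < Ones k ω - k / 2} :=
    fun ω ⟨k, _, hkM, hk⟩ => ⟨k, hkM, hk⟩
  refine (measure_mono hsub).trans <|
    (hμ.measure_exists_lt_ones_sub_le hMpos (by positivity)).trans <| ENNReal.ofReal_le_ofReal ?_
  have hb2 : 2 * b ^ 2 = δ ^ 2 * m * L := by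
    rw [mul_pow, Real.sq_sqrt (by positivity)]; ring
  have key : δ * L - 1 ≤ 2 * b ^ 2 / M := by
    rw [hb2, le_div_iff₀ (by positivity)]
    rcases le_or_gt (δ * L - 1) 0 with h | h
    · exact (mul_nonpos_of_nonpos_of_nonneg h (Nat.cast_nonneg M)).trans (by positivity)
    have hδLA : δ * L ≤ δ * A := mul_le_mul_of_nonneg_left hLA (by positivity)
    calc (δ * L - 1) * M ≤ (δ * L - 1) * (δ * A + 1) := by gcongr
      _ = δ ^ 2 * A * L + (δ * L - δ * A) - 1 := by ring
      _ ≤ δ ^ 2 * A * L := by linarith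
      _ ≤ δ ^ 2 * m * L := by gcongr
  rw [mul_assoc, ← Real.exp_add]
  gcongr
  rw [neg_mul, neg_div]
  linarith

end UniformMeasure

lemma summable_exp_neg_mul_log_log_ceil_pow {δ : ℝ} (hδ : 1 < δ) :
    Summable fun n : ℕ => Real.exp (-δ * Real.log (Real.log ⌈δ ^ n⌉₊)) := by
  have hlogδ : 0 < Real.log δ := Real.log_pos hδ
  have hg : Summable fun n : ℕ => Real.log δ ^ (-δ) * (n : ℝ) ^ (-δ) :=
    (Real.summable_nat_rpow.2 (by linarith)).mul_left _
  refine hg.of_norm_bounded_eventually_nat <| (eventually_ge_atTop 1).mono fun n hn => ?_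
  have hn : 0 < n * Real.log δ := mul_pos (by exact_mod_cast hn) hlogδ
  have hlog : n * Real.log δ ≤ Real.log ⌈δ ^ n⌉₊ := by
    rw [← Real.log_pow]
    exact Real.log_le_log (by positivity) (Nat.le_ceil _)
  calc ‖Real.exp (-δ * Real.log (Real.log ⌈δ ^ n⌉₊))‖
      ≤ Real.exp (-δ * Real.log (n * Real.log δ)) := by
        rw [Real.norm_eq_abs, Real.abs_exp]
        exact Real.exp_le_exp.2 <|
          mul_le_mul_of_nonpos_left (Real.log_le_log hn hlog) (by linarith)
    _ = Real.log δ ^ (-δ) * (n : ℝ) ^ (-δ) := by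
        rw [mul_comm, ← Real.rpow_def_of_pos hn, Real.mul_rpow (by positivity) hlogδ.le, mul_comm]

lemma exists_forall_le_ofReal_mul_of_eventually {f : ℕ → ENNReal} {g : ℕ → ℝ}
    (hf : ∀ n, f n ≤ 1) (hg : ∀ n, 0 < g n) {C : ℝ} (hC : 0 < C)
    (hev : ∀ᶠ n in atTop, f n ≤ ENNReal.ofReal (C * g n)) :
    ∃ c, 0 < c ∧ ∀ n, f n ≤ ENNReal.ofReal (c * g n) := by
  obtain ⟨N, hN⟩ := eventually_atTop.1 hev
  have hsum : 0 ≤ ∑ i ∈ range N, (g i)⁻¹ := sum_nonneg fun i _ => (inv_pos.2 (hg i)).le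
  refine ⟨C + ∑ i ∈ range N, (g i)⁻¹, by positivity, fun n => ?_⟩
  rcases le_or_gt N n with hn | hn
  · refine (hN n hn).trans (ENNReal.ofReal_le_ofReal ?_)
    gcongr
    · exact (hg n).le
    · linarith
  · refine (hf n).trans (ENNReal.one_le_ofReal.2 ?_)
    have : (g n)⁻¹ ≤ C + ∑ i ∈ range N, (g i)⁻¹ := by
      linarith [single_le_sum (fun i _ => (inv_pos.2 (hg i)).le) (mem_range.2 hn)]
    calc (1 : ℝ) = (g n)⁻¹ * g n := (inv_mul_cancel₀ (hg n).ne').symm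
      _ ≤ _ := by gcongr; exact (hg n).le

theorem lil_blocks_summable_general
    (μ : Measure (ℕ → Bool)) (hμ : UniformMeasure μ)
    (δ : ℚ) (hδ : 1 < δ) :
    ∃ c : ℝ, 0 < c ∧
      (∀ n : ℕ,
        μ {ω : ℕ → Bool | ∃ k : ℕ, ⌈(δ : ℝ) ^ n⌉₊ ≤ k ∧ k ≤ ⌈(δ : ℝ) ^ (n + 1)⌉₊ ∧
            (δ : ℝ) * Real.sqrt ((1 / 2) * ⌈(δ : ℝ) ^ n⌉₊ *
              Real.log (Real.log ⌈(δ : ℝ) ^ n⌉₊)) < Ones k ω - k / 2} ≤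
          ENNReal.ofReal (c * Real.exp (-(δ : ℝ) * Real.log (Real.log ⌈(δ : ℝ) ^ n⌉₊)))) ∧
      (∑' n : ℕ, μ {ω : ℕ → Bool | ∃ k : ℕ, ⌈(δ : ℝ) ^ n⌉₊ ≤ k ∧ k ≤ ⌈(δ : ℝ) ^ (n + 1)⌉₊ ∧
          (δ : ℝ) * Real.sqrt ((1 / 2) * ⌈(δ : ℝ) ^ n⌉₊ *
            Real.log (Real.log ⌈(δ : ℝ) ^ n⌉₊)) < Ones k ω - k / 2}) < ⊤ := by
  have hδ' : (1 : ℝ) < δ := by exact_mod_cast hδ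
  have := hμ.isProbabilityMeasure
  have hlarge : ∀ᶠ n in atTop, 3 ≤ (δ : ℝ) ^ n :=
    (tendsto_pow_atTop_atTop_of_one_lt hδ').eventually_ge_atTop 3
  obtain ⟨c, hc, hbound⟩ := exists_forall_le_ofReal_mul_of_eventually
    (f := fun n => μ (lilBlock δ n)) (fun _ => prob_le_one) (fun _ => Real.exp_pos _)
    (by positivity) (hlarge.mono fun _ hn => hμ.measure_lilBlock_le hδ' hn)
  exact ⟨c, hc, hbound, (ENNReal.tsum_le_tsum hbound).trans_lt
    ((summable_exp_neg_mul_log_log_ceil_pow hδ').mul_left c).tsum_ofReal_lt_top⟩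

/-- maximal inequality transfer for the law of the iterated logarithm. -/
theorem lil_blocks_summable
    (μ : Measure (ℕ → Bool)) (hμ : UniformMeasure μ) [IsProbabilityMeasure μ]
    (hmax : ∀ (m : ℕ) (a : ℝ),
      μ {ω : ℕ → Bool | ∃ k, 1 ≤ k ∧ k ≤ m ∧ a < Ones k ω} ≤ 2 * μ {ω : ℕ → Bool | a < Ones m ω})
    (δ : ℚ) (hδ : 1 < δ) :
    ∃ c : ℝ, 0 < c ∧
      (∀ n : ℕ,
        μ {ω : ℕ → Bool | ∃ k : ℕ, ⌈(δ : ℝ) ^ n⌉₊ ≤ k ∧ k ≤ ⌈(δ : ℝ) ^ (n + 1)⌉₊ ∧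
            (δ : ℝ) * Real.sqrt ((1 / 2) * ⌈(δ : ℝ) ^ n⌉₊ *
              Real.log (Real.log ⌈(δ : ℝ) ^ n⌉₊)) < Ones k ω - k / 2} ≤
          ENNReal.ofReal (c * Real.exp (-(δ : ℝ) * Real.log (Real.log ⌈(δ : ℝ) ^ n⌉₊)))) ∧
      (∑' n : ℕ, μ {ω : ℕ → Bool | ∃ k : ℕ, ⌈(δ : ℝ) ^ n⌉₊ ≤ k ∧ k ≤ ⌈(δ : ℝ) ^ (n + 1)⌉₊ ∧
          (δ : ℝ) * Real.sqrt ((1 / 2) * ⌈(δ : ℝ) ^ n⌉₊ *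
            Real.log (Real.log ⌈(δ : ℝ) ^ n⌉₊)) < Ones k ω - k / 2}) < ⊤ :=
  lil_blocks_summable_general μ hμ δ hδ
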